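/- Let G be a topological group, K a compact subgroup of G, and let H₁ and H₂ be Hausdorff topological spaces equipped with continuous K-actions. Let K act continuously on G × Hᵢ by k·(g, h) = (g k⁻¹, k·h), and let G ×_K Hᵢ denote the quotient space of G × Hᵢ by this action, with the quotient topology; write [g, h] for the class of (g, h). If f : H₁ → H₂ is a continuous, K-equivariant (f(k·h) = k·f(h) for all k ∈ K, h ∈ H₁), proper map, then the induced map G ×_K H₁ → G ×_K H₂ given by [g, h] ↦ [g, f(h)] is a proper map. -/

import Mathlib

/-!
The quotient map `G × H → G ×_K H` is the orbit map of an action of the compact group `K`,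
hence closed (the saturation of a closed set `C` is `K • C`) with compact fibres (the orbits),
i.e. proper. The induced map of `f` is then proper because its composite with the surjective
quotient map `G × H₁ → G ×_K H₁` is the proper map `G × H₁ → G × H₂ → G ×_K H₂`.
-/

/-- The relation on `G × H` whose quotient is the twisted product `G ×_K H`:
`(g, h) ∼ (g k⁻¹, k • h)` for `k ∈ K`, i.e. the orbit relation of the `K`-action
`k • (g, h) = (g k⁻¹, k • h)`. -/
def twistedRel (G : Type*) [Group G] (K : Subgroup G) (H : Type*) [MulAction K H] :
    (G × H) → (G × H) → Prop :=
  fun p q => ∃ k : K, q.1 = p.1 * (k : G)⁻¹ ∧ q.2 = k • p.2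

open Set
open scoped Pointwise

theorem MulAction.isProperMap_quot_mk_of_compactSpace {α β : Type*} [Group α]
    [TopologicalSpace α] [CompactSpace α] [ContinuousInv α] [TopologicalSpace β]
    [MulAction α β] [ContinuousSMul α β] {r : β → β → Prop}
    (hr : ∀ x y, r x y ↔ ∃ a : α, a • x = y) :
    IsProperMap (Quot.mk r) := by
  have hr_equiv : Equivalence r :=
    { refl := fun x => (hr x x).2 ⟨1, one_smul α x⟩
      symm := fun {x y} hxy => by
        obtain ⟨a, rfl⟩ := (hr x y).1 hxy
        exact (hr _ x).2 ⟨a⁻¹, inv_smul_smul a x⟩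
      trans := fun {x y z} hxy hyz => by
        obtain ⟨a, rfl⟩ := (hr x y).1 hxy
        obtain ⟨b, rfl⟩ := (hr _ z).1 hyz
        exact (hr x _).2 ⟨b * a, mul_smul b a x⟩ }
  have hmk_eq : ∀ x y, Quot.mk r x = Quot.mk r y ↔ ∃ a : α, a • x = y := fun x y => by
    rw [Quot.eq, hr_equiv.eqvGen_iff, hr]
  have hsaturation : ∀ C : Set β, Quot.mk r ⁻¹' (Quot.mk r '' C) = (univ : Set α) • C := by
    intro C
    ext y
    simp only [mem_preimage, mem_image, mem_smul, mem_univ, true_and, hmk_eq]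
    exact ⟨fun ⟨x, hx, a, hax⟩ => ⟨a, x, hx, hax⟩, fun ⟨a, x, hx, hax⟩ => ⟨x, hx, a, hax⟩⟩
  have hfiber : ∀ x, Quot.mk r ⁻¹' {Quot.mk r x} = range (· • x : α → β) := by
    intro x
    ext y
    simp only [mem_preimage, mem_singleton_iff, mem_range, eq_comm (a := Quot.mk r y), hmk_eq]
  refine isProperMap_iff_isClosedMap_and_compact_fibers.2 ⟨continuous_quot_mk, ?_, ?_⟩
  · intro C hC
    rw [← isQuotientMap_quot_mk.isClosed_preimage, hsaturation]
    exact hC.smul_left_of_isCompact isCompact_univ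
  · intro y
    induction y using Quot.ind with
    | mk x => exact hfiber x ▸ isCompact_range (continuous_id.smul continuous_const)

theorem IsProperMap.quot_map {X Y : Type*} [TopologicalSpace X] [TopologicalSpace Y]
    {r : X → X → Prop} {s : Y → Y → Prop} {f : X → Y} (hr : ∀ a b, r a b → s (f a) (f b))
    (hf : IsProperMap f) (hs : IsProperMap (Quot.mk s)) :
    IsProperMap (Quot.map f hr) :=
  isProperMap_of_comp_of_surj continuous_quot_mk (continuous_quot_map hr hf.continuous)
    (hs.comp hf) Quot.mk_surjective

section TwistedProduct

variable {G : Type*} [Group G] (K : Subgroup G) {H : Type*} [MulAction K H]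

variable (G H) in
/-- Not an instance: it would clash with the componentwise action `Prod.instSMul`. -/
abbrev twistedMulAction : MulAction K (G × H) where
  smul k p := (p.1 * (k : G)⁻¹, k • p.2)
  one_smul p := Prod.ext (by show p.1 * ((1 : K) : G)⁻¹ = p.1; simp) (one_smul K p.2)
  mul_smul k l p := Prod.ext
    (by show p.1 * ((k * l : K) : G)⁻¹ = p.1 * (l : G)⁻¹ * (k : G)⁻¹; simp [mul_assoc])
    (mul_smul k l p.2)

theorem twistedMulAction_continuousSMul [TopologicalSpace G] [IsTopologicalGroup G]
    [TopologicalSpace H] [ContinuousSMul K H] :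
    @ContinuousSMul K (G × H) (twistedMulAction G K H).toSMul _ _ :=
  @ContinuousSMul.mk K (G × H) (twistedMulAction G K H).toSMul _ _ <|
    (continuous_snd.fst.mul (continuous_subtype_val.comp continuous_fst).inv).prodMk
      (continuous_fst.smul continuous_snd.snd)

theorem isProperMap_quot_mk_twistedRel [TopologicalSpace G] [IsTopologicalGroup G]
    (hK : IsCompact (K : Set G)) [TopologicalSpace H] [ContinuousSMul K H] :
    IsProperMap (Quot.mk (twistedRel G K H)) :=
  have : CompactSpace K := isCompact_iff_compactSpace.mp hK
  @MulAction.isProperMap_quot_mk_of_compactSpace K (G × H) _ _ _ _ _ (twistedMulAction G K H)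
    (twistedMulAction_continuousSMul K) _ fun p q =>
      exists_congr fun k => by rw [Prod.ext_iff, eq_comm (a := q.1), eq_comm (a := q.2)]; rfl

theorem twistedRel_map {H' : Type*} [MulAction K H'] {f : H → H'}
    (hf : ∀ (k : K) (h : H), f (k • h) = k • f h) (p q : G × H) (hpq : twistedRel G K H p q) :
    twistedRel G K H' (Prod.map id f p) (Prod.map id f q) := by
  obtain ⟨k, hq₁, hq₂⟩ := hpq
  exact ⟨k, hq₁, by simp only [Prod.map_snd, hq₂, hf]⟩

end TwistedProduct

theorem twistedProduct_map_proper_general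
    {G : Type*} [Group G] [TopologicalSpace G] [IsTopologicalGroup G]
    (K : Subgroup G) (hK : IsCompact (K : Set G))
    {H₁ H₂ : Type*} [TopologicalSpace H₁] [TopologicalSpace H₂]
    [MulAction K H₁] [MulAction K H₂] [ContinuousSMul K H₂]
    (f : H₁ → H₂)
    (hf_equiv : ∀ (k : K) (h : H₁), f (k • h) = k • f h)
    (hf_proper : IsProperMap f) :
    ∃ F : Quot (twistedRel G K H₁) → Quot (twistedRel G K H₂),
      (∀ (g : G) (h : H₁),
        F (Quot.mk (twistedRel G K H₁) (g, h)) = Quot.mk (twistedRel G K H₂) (g, f h)) ∧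
      IsProperMap F :=
  ⟨Quot.map _ (twistedRel_map K hf_equiv), fun _ _ => rfl,
    (isProperMap_id.prodMap hf_proper).quot_map _ (isProperMap_quot_mk_twistedRel K hK)⟩

/-- **Properness transfers to twisted products.**
Let `G` be a topological group, `K` a compact subgroup, and `H₁`, `H₂` Hausdorff spaces
with continuous `K`-actions.  Let `G ×_K Hᵢ` be the quotient of `G × Hᵢ` by the
`K`-action `k • (g, h) = (g k⁻¹, k • h)`, with the quotient topology.  If `f : H₁ → H₂`
is a continuous, `K`-equivariant, proper map, then the induced map
`G ×_K H₁ → G ×_K H₂`, `[g, h] ↦ [g, f h]`, is well defined and proper. -/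
theorem twistedProduct_map_proper
    {G : Type*} [Group G] [TopologicalSpace G] [IsTopologicalGroup G]
    (K : Subgroup G) (hK : IsCompact (K : Set G))
    {H₁ H₂ : Type*} [TopologicalSpace H₁] [TopologicalSpace H₂]
    [T2Space H₁] [T2Space H₂]
    [MulAction K H₁] [MulAction K H₂] [ContinuousSMul K H₁] [ContinuousSMul K H₂]
    (f : H₁ → H₂) (hf_cont : Continuous f)
    (hf_equiv : ∀ (k : K) (h : H₁), f (k • h) = k • f h)
    (hf_proper : IsProperMap f) :
    ∃ F : Quot (twistedRel G K H₁) → Quot (twistedRel G K H₂),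
      (∀ (g : G) (h : H₁),
        F (Quot.mk (twistedRel G K H₁) (g, h)) = Quot.mk (twistedRel G K H₂) (g, f h)) ∧
      IsProperMap F :=
  twistedProduct_map_proper_general K hK f hf_equiv hf_proper
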